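/- arXiv:0907.2335 — 2 statements merged into one kernel-verified Lean document; each statement's English description precedes it below -/
import Mathlib

section
/- For any α ≠ 0 in a field K of characteristic zero, the Riordan matrix T(1 | αx - 1), i.e., the lower triangular matrix D = (d_{n,k}) with generating function column k equal to x^k/(αx-1)^{k+1}, is an involution: D² = I. -/
open PowerSeries

/-- `psComp f g` is the formal composition `f ∘ g`, i.e. the substitution of `g` into `f`
(meaningful when `g` has zero constant term). -/
noncomputable def psComp {K : Type*} [Field K] (f g : K⟦X⟧) : K⟦X⟧ :=
  PowerSeries.mk fun m => ∑ n ∈ Finset.range (m + 1), coeff n f * coeff m (g ^ n)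


/-- Entry `(n,k)` of the Riordan matrix `T(f∣g)`: the `k`-th column has generating
function `f·x^k/g^(k+1)` (Luzón–Morón notation). -/
noncomputable def riordanEntry {K : Type*} [Field K] (f g : K⟦X⟧) (n k : ℕ) : K :=
  coeff n (f * X ^ k * (g ^ (k + 1))⁻¹)

/-- Product of infinite lower triangular matrices. -/
noncomputable def matMul {K : Type*} [Field K] (A B : ℕ → ℕ → K) (n k : ℕ) : K :=
  ∑ j ∈ Finset.range (n + 1), A n j * B j k

/-!
The `k`-th column of `T(1 ∣ αx - 1)` is `(-1)^(k+1) x^k (1 - αx)^(-(k+1))`, so its entries are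
`d n k = (-1)^(k+1) α^(n-k) C(n,k)`. In `∑_j d n j * d j k` the powers of `α` combine to
`α^(n-k)` and the signs to `(-1)^(j+k)`, which leaves binomial inversion:
`∑_j (-1)^(j+k) C(n,j) C(j,k) = δ_{nk}`.
-/

open Finset

theorem sum_range_neg_one_pow_mul_choose (R : Type*) [Ring R] (m : ℕ) :
    ∑ i ∈ range (m + 1), (-1 : R) ^ i * m.choose i = if m = 0 then 1 else 0 := by
  exact_mod_cast congrArg (Int.cast : ℤ → R) Int.alternating_sum_range_choose

theorem sum_range_neg_one_pow_mul_choose_mul_choose (R : Type*) [Ring R] (n k : ℕ) :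
    ∑ j ∈ range (n + 1), (-1 : R) ^ (j + k) * (n.choose j * j.choose k : ℕ) =
      if n = k then 1 else 0 := by
  rcases lt_or_ge n k with hnk | hkn
  · rw [if_neg hnk.ne]
    refine sum_eq_zero fun j hj => ?_
    rw [Nat.choose_eq_zero_of_lt ((Nat.lt_succ_iff.mp (mem_range.mp hj)).trans_lt hnk)]
    simp
  obtain ⟨m, rfl⟩ := Nat.exists_eq_add_of_le hkn
  have low :
      ∑ j ∈ range k, (-1 : R) ^ (j + k) * (((k + m).choose j * j.choose k : ℕ) : R) = 0 :=
    sum_eq_zero fun j hj => by simp [Nat.choose_eq_zero_of_lt (mem_range.mp hj)]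
  have high (i : ℕ) :
      (-1 : R) ^ (k + i + k) * (((k + m).choose (k + i) * (k + i).choose k : ℕ) : R) =
        ((k + m).choose k : R) * ((-1) ^ i * m.choose i) := by
    rw [Nat.choose_mul (Nat.le_add_right k i), Nat.add_sub_cancel_left, Nat.add_sub_cancel_left,
      show k + i + k = i + 2 * k by ring, pow_add, pow_mul, neg_one_sq, one_pow, mul_one,
      Nat.cast_mul, ← mul_assoc, ((Commute.neg_one_left _).pow_left i).eq, mul_assoc]
  rw [show k + m + 1 = k + (m + 1) by ring, sum_range_add, low, zero_add]
  simp only [high, ← mul_sum, sum_range_neg_one_pow_mul_choose]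
  split_ifs <;> simp_all

theorem C_mul_X_sub_one_eq {K : Type*} [Field K] (α : K) :
    (C α * X - 1 : K⟦X⟧) = -rescale α (1 - X) := by
  rw [map_sub, map_one, rescale_X]
  ring

theorem inv_C_mul_X_sub_one_pow {K : Type*} [Field K] (α : K) (k : ℕ) :
    ((C α * X - 1) ^ (k + 1))⁻¹ =
      C ((-1) ^ (k + 1)) * rescale α (mk fun n => ((k + n).choose k : K)) := by
  symm
  rw [PowerSeries.eq_inv_iff_mul_eq_one (by simp), C_mul_X_sub_one_eq,
    neg_pow (rescale α (1 - X)), ← map_pow]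
  calc C ((-1) ^ (k + 1)) * rescale α (mk fun n => ((k + n).choose k : K)) *
        ((-1) ^ (k + 1) * rescale α ((1 - X) ^ (k + 1)))
      = C ((-1) ^ (k + 1) * (-1) ^ (k + 1)) *
          rescale α ((mk fun n => ((k + n).choose k : K)) * (1 - X) ^ (k + 1)) := by
        rw [map_mul, map_mul, map_pow, map_neg, map_one]
        ring
    _ = 1 := by
        rw [mk_add_choose_mul_one_sub_pow_eq_one, ← mul_pow]
        simp

theorem riordanEntry_one_C_mul_X_sub_one {K : Type*} [Field K] (α : K) (n k : ℕ) :
    riordanEntry 1 (C α * X - 1) n k = (-1) ^ (k + 1) * α ^ (n - k) * n.choose k := by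
  rw [riordanEntry, one_mul, inv_C_mul_X_sub_one_pow, coeff_X_pow_mul']
  split_ifs with hkn
  · rw [coeff_C_mul, coeff_rescale, coeff_mk, Nat.add_sub_cancel' hkn]
    ring
  · simp [Nat.choose_eq_zero_of_lt (not_le.mp hkn)]

theorem stmt6_general {K : Type*} [Field K] (α : K) :
    ∀ n k : ℕ,
      matMul (riordanEntry 1 (C α * X - 1)) (riordanEntry 1 (C α * X - 1)) n k =
        if n = k then 1 else 0 := by
  intro n k
  have term (j : ℕ) (hj : j ∈ range (n + 1)) :
      riordanEntry 1 (C α * X - 1) n j * riordanEntry 1 (C α * X - 1) j k =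
        α ^ (n - k) * ((-1) ^ (j + k) * (n.choose j * j.choose k : ℕ)) := by
    simp only [riordanEntry_one_C_mul_X_sub_one]
    rcases lt_or_ge j k with hjk | hkj
    · simp [Nat.choose_eq_zero_of_lt hjk]
    · have hpow : α ^ (n - j) * α ^ (j - k) = α ^ (n - k) := by
        rw [← pow_add]
        congr 1
        have := mem_range.mp hj
        omega
      have hsign : (-1 : K) ^ (j + 1) * (-1) ^ (k + 1) = (-1) ^ (j + k) := by
        rw [← pow_add, show j + 1 + (k + 1) = j + k + 2 by ring, pow_add, neg_one_sq, mul_one]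
      rw [← hpow, ← hsign]
      push_cast
      ring
  rw [matMul, sum_congr rfl term, ← mul_sum, sum_range_neg_one_pow_mul_choose_mul_choose]
  split_ifs with h <;> simp [h]

/-- For α ≠ 0, the Riordan matrix T(1 ∣ αx - 1) is an involution: D² = I. -/
theorem stmt6 {K : Type*} [Field K] [CharZero K] (α : K) (hα : α ≠ 0) :
    ∀ n k : ℕ,
      matMul (riordanEntry 1 (C α * X - 1)) (riordanEntry 1 (C α * X - 1)) n k =
        if n = k then 1 else 0 :=
  stmt6_general α
end

section
/- Let s(x) be a formal power series over a field of characteristic zero with s(0) = 0 and nonzero linear coefficient, and let t be its compositional inverse. If t(-s(x)) = -x, then s is odd (s(-x) = -s(x)). -/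
/-!
Negating the argument commutes with composition on the right, so `t(s(-x)) = (t ∘ s)(-x) = -x`,
which is `t(-s(x))` by hypothesis. Composition with a fixed `t` with `t₁ ≠ 0` is injective on
series without constant term: once `a` and `b` agree below degree `m`, the `m`-th coefficient of
`t(a) - t(b)` is `t₁ (aₘ - bₘ)`, because `aⁿ - bⁿ = (a - b) ∑ aⁱ bⁿ⁻¹⁻ⁱ` gains an extra factor
`X` for `n ≥ 2`.
-/

open PowerSeries

theorem mul_dvd_pow_sub_pow_of_dvd {R : Type*} [CommRing R] {x y a b : R}
    (ha : x ∣ a) (hb : x ∣ b) (hab : y ∣ a - b) {n : ℕ} (hn : 2 ≤ n) :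
    x * y ∣ a ^ n - b ^ n := by
  rw [← geom_sum₂_mul]
  refine mul_dvd_mul (Finset.dvd_sum fun i _ => ?_) hab
  rcases Nat.eq_zero_or_pos i with rfl | hi
  · exact dvd_mul_of_dvd_right (dvd_pow hb (by omega)) _
  · exact dvd_mul_of_dvd_left (dvd_pow ha hi.ne') _

section

variable {K : Type*} [Field K]

theorem rescale_psComp (c : K) (f g : K⟦X⟧) :
    rescale c (psComp f g) = psComp f (rescale c g) := by
  ext m
  simp only [psComp, coeff_rescale, coeff_mk, ← map_pow, Finset.mul_sum]
  exact Finset.sum_congr rfl fun n _ => by ring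

theorem coeff_one_psComp (f g : K⟦X⟧) : coeff 1 (psComp f g) = coeff 1 f * coeff 1 g := by
  simp [psComp, Finset.sum_range_succ]

theorem coeff_psComp_sub_psComp {t a b : K⟦X⟧} (ha : X ∣ a) (hb : X ∣ b) {m : ℕ}
    (hab : X ^ m ∣ a - b) :
    coeff m (psComp t a) - coeff m (psComp t b) = coeff 1 t * coeff m (a - b) := by
  simp only [psComp, coeff_mk, ← Finset.sum_sub_distrib, ← mul_sub, ← map_sub]
  rw [Finset.sum_eq_single 1, pow_one, pow_one]
  · rintro (_ | _ | n) _ hn1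
    · simp
    · exact absurd rfl hn1
    · have hdvd := mul_dvd_pow_sub_pow_of_dvd ha hb hab (n := n + 2) (by omega)
      rw [← pow_succ', X_pow_dvd_iff] at hdvd
      rw [hdvd m m.lt_succ_self, mul_zero]
  · intro h1
    obtain rfl : m = 0 := by simpa using h1
    rw [pow_one, pow_one, coeff_zero_eq_constantCoeff_apply, X_dvd_iff.mp (dvd_sub ha hb),
      mul_zero]

theorem eq_of_psComp_eq {t a b : K⟦X⟧} (ht : coeff 1 t ≠ 0) (ha : X ∣ a) (hb : X ∣ b)
    (h : psComp t a = psComp t b) : a = b := by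
  have hdvd : ∀ m, X ^ m ∣ a - b := by
    intro m
    induction m with
    | zero => exact one_dvd _
    | succ m ih =>
      have hm : coeff 1 t * coeff m (a - b) = 0 := by
        rw [← coeff_psComp_sub_psComp ha hb ih, h, sub_self]
      rw [X_pow_dvd_iff] at ih ⊢
      intro j hj
      rcases Nat.lt_succ_iff_lt_or_eq.mp hj with hj | rfl
      · exact ih j hj
      · exact (mul_eq_zero.mp hm).resolve_left ht
  ext n
  rw [← sub_eq_zero, ← map_sub]
  exact X_pow_dvd_iff.mp (hdvd (n + 1)) n n.lt_succ_self

end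

theorem stmt12_general {K : Type*} [Field K] (s t : K⟦X⟧)
    (h0 : constantCoeff s = 0)
    (hts : psComp t s = X)
    (h : psComp t (-s) = -X) :
    rescale (-1) s = -s := by
  have ht : coeff 1 t ≠ 0 := by
    refine left_ne_zero_of_mul_eq_one (b := coeff 1 s) ?_
    rw [← coeff_one_psComp, hts, coeff_X, if_pos rfl]
  have hneg : psComp t (rescale (-1) s) = psComp t (-s) := by
    rw [← rescale_psComp, hts, h, rescale_X, map_neg, map_one, neg_one_mul]
  refine eq_of_psComp_eq ht ?_ (dvd_neg.mpr (X_dvd_iff.mpr h0)) hneg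
  rw [X_dvd_iff, ← coeff_zero_eq_constantCoeff_apply, coeff_rescale, pow_zero, one_mul,
    coeff_zero_eq_constantCoeff_apply, h0]

/-- If t is the compositional inverse of s and t(-s(x)) = -x, then s is odd. -/
theorem stmt12 {K : Type*} [Field K] [CharZero K] (s t : K⟦X⟧)
    (h0 : constantCoeff s = 0) (h1 : coeff 1 s ≠ 0)
    (ht0 : constantCoeff t = 0)
    (hst : psComp s t = X) (hts : psComp t s = X)
    (h : psComp t (-s) = -X) :
    rescale (-1) s = -s :=
  stmt12_general s t h0 hts h
end
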